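/- The constant function 1_B is a cyclic vector for the quasi-regular representation π: the closed linear span of {π(γ)1_B : γ ∈ F_r} equals L²(B,μ). -/

import Mathlib

/-!
Setting: the free group `F_r = ⟨a₁,…,a_r⟩` (`r ≥ 2`), its boundary `B` of infinite
reduced words, the visual measure `μ` on `B`, the Gromov product, the Poisson kernel
`P(γ,ξ) = (2r-1)^(2(γ|ξ)-|γ|)` and the Harish-Chandra function `Ξ`.
-/

open MeasureTheory Filter Topology ComplexConjugate
open scoped ENNReal

namespace ArxivFree

/-- The alphabet `S = {a₁^{±1},…,a_r^{±1}}` of generators and their inverses: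
a letter is a generator together with a sign. -/
abbrev Letter (r : ℕ) := Fin r × Bool

/-- The inverse of a letter. -/
def bar {r : ℕ} (x : Letter r) : Letter r := (x.1, !x.2)

/-- The boundary `B`: infinite reduced words over the alphabet, i.e. sequences of
letters in which no letter is immediately followed by its inverse. -/
abbrev Boundary (r : ℕ) := {ξ : ℕ → Letter r // ∀ i, ξ (i + 1) ≠ bar (ξ i)}

/-- `l` is a (finite) prefix of the infinite word `ξ`. -/
def IsPrefixSeq {r : ℕ} (l : List (Letter r)) (ξ : ℕ → Letter r) : Prop :=
  ∀ i, i < l.length → l[i]? = some (ξ i)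

/-- The cylinder `B_u`: infinite reduced words admitting the reduced word of `u`
as a prefix. -/
def cylinder {r : ℕ} (u : FreeGroup (Fin r)) : Set (Boundary r) :=
  {ξ | IsPrefixSeq (FreeGroup.toWord u) ξ.1}

/-- The Gromov product: the length of the longest common prefix of the finite word `l`
and the infinite word `ξ`. -/
def gromov {r : ℕ} (l : List (Letter r)) (ξ : ℕ → Letter r) : ℕ :=
  Nat.findGreatest (fun k => ∀ i, i < k → l[i]? = some (ξ i)) l.length

/-- The Poisson kernel `P(γ,ξ) = (2r-1)^(2(γ|ξ) - |γ|)`. -/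
noncomputable def PK {r : ℕ} (γ : FreeGroup (Fin r)) (ξ : Boundary r) : ℝ :=
  (2 * (r : ℝ) - 1) ^
    (2 * (gromov (FreeGroup.toWord γ) ξ.1 : ℤ) - ((FreeGroup.toWord γ).length : ℤ))

/-- The sphere `S_n ⊆ F_r` of elements of word length `n`, as a finite set. -/
noncomputable def sphere (r n : ℕ) : Finset (FreeGroup (Fin r)) :=
  (Set.Finite.preimage (Function.Injective.injOn FreeGroup.toWord_injective)
    (List.finite_length_eq (Letter r) n)).toFinset

/-- The Harish-Chandra function `Ξ(γ) = ∫_B P(γ,ξ)^{1/2} dμ(ξ)`. -/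
noncomputable def HC {r : ℕ} (μ : Measure (Boundary r)) (γ : FreeGroup (Fin r)) : ℝ :=
  ∫ ξ, Real.sqrt (PK γ ξ) ∂μ

lemma bar_bar {r : ℕ} (x : Letter r) : bar (bar x) = x := by
  simp [bar]

lemma reduced_getElem {r : ℕ} {l : List (Letter r)} (hl : FreeGroup.reduce l = l)
    {n : ℕ} (h : n + 1 < l.length) : l[n + 1]'h ≠ bar (l[n]'(by omega)) := by
  intro hEq
  have hdecomp : l = l.take n ++ (l[n]'(by omega)) :: (l[n+1]'h) :: l.drop (n + 2) := by
    conv_lhs => rw [← List.take_append_drop n l]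
    congr 1
    rw [List.drop_eq_getElem_cons (by omega : n < l.length),
      List.drop_eq_getElem_cons h]
  rw [hEq] at hdecomp
  exact FreeGroup.reduce.not (x := (l[n]'(by omega)).1) (b := (l[n]'(by omega)).2)
    (L₂ := l.take n) (L₃ := l.drop (n+2)) (by rw [hl]; exact hdecomp)

def cancelLen {r : ℕ} (l : List (Letter r)) (ξ : ℕ → Letter r) : ℕ :=
  Nat.findGreatest (fun k => ∀ i, i < k → l.reverse[i]? = some (bar (ξ i))) l.length

def concatSeq {r : ℕ} (l : List (Letter r)) (ξ : ℕ → Letter r) : ℕ → Letter r := fun n =>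
  if h : n < l.length - cancelLen l ξ then l[n]'(by omega)
  else ξ (n - (l.length - cancelLen l ξ) + cancelLen l ξ)

lemma concatSeq_reduced {r : ℕ} (l : List (Letter r)) (ξ : ℕ → Letter r)
    (hl : FreeGroup.reduce l = l) (hξ : ∀ i, ξ (i + 1) ≠ bar (ξ i)) :
    ∀ n, concatSeq l ξ (n + 1) ≠ bar (concatSeq l ξ n) := by
  intro n
  have hmL : cancelLen l ξ ≤ l.length := Nat.findGreatest_le _
  unfold concatSeq
  by_cases h1 : n + 1 < l.length - cancelLen l ξ
  · have h0 : n < l.length - cancelLen l ξ := by omega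
    rw [dif_pos h1, dif_pos h0]
    exact reduced_getElem hl (by omega)
  · by_cases h0 : n < l.length - cancelLen l ξ
    · -- junction case
      rw [dif_neg h1, dif_pos h0]
      set m := cancelLen l ξ with hmdef
      have hfg : Nat.findGreatest
          (fun k => ∀ i, i < k → l.reverse[i]? = some (bar (ξ i))) l.length = m := rfl
      have hmlt : m < l.length := by omega
      have hidx : n + 1 - (l.length - m) + m = m := by omega
      rw [hidx]
      have hnot : ¬ (∀ i, i < m + 1 → l.reverse[i]? = some (bar (ξ i))) :=
        Nat.findGreatest_is_greatest (k := m + 1) (by rw [hfg]; omega) (by omega)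
      have hQ : ∀ i, i < m → l.reverse[i]? = some (bar (ξ i)) := by
        rcases Nat.eq_zero_or_pos m with hz | hpos
        · intro i hi; omega
        · exact Nat.findGreatest_of_ne_zero hfg (by omega)
      have hrev : l.reverse[m]? ≠ some (bar (ξ m)) := by
        intro hcon
        apply hnot
        intro i hi
        rcases Nat.lt_succ_iff_lt_or_eq.mp hi with h | rfl
        · exact hQ i h
        · exact hcon
      intro hEq
      apply hrev
      have hidx2 : l.length - 1 - m = n := by omega
      rw [List.getElem?_reverse hmlt, List.getElem?_eq_getElem (by omega)]
      rw [hEq, bar_bar]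
      simp only [hidx2]
    · rw [dif_neg h1, dif_neg h0]
      have hidx : n + 1 - (l.length - cancelLen l ξ) + cancelLen l ξ =
          (n - (l.length - cancelLen l ξ) + cancelLen l ξ) + 1 := by omega
      rw [hidx]
      exact hξ _

/-- The action of the free group on its boundary. -/
def act {r : ℕ} (γ : FreeGroup (Fin r)) (ξ : Boundary r) : Boundary r :=
  ⟨concatSeq (FreeGroup.toWord γ) ξ.1,
    concatSeq_reduced _ _ (FreeGroup.reduce_toWord γ) ξ.2⟩

/-!
Put `q = 2r - 1`. Up to the constant factor `q^{-|γ|/2}`, the vector `π(γ)1_B = P(γ,·)^{1/2}` is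
`ξ ↦ q^{(γ|ξ)}`. If the reduced word of `v` is that of `u` followed by one letter, then
`(v|ξ) = (u|ξ)` off the cylinder `B_v`, while `(v|ξ) = |v|` and `(u|ξ) = |u|` on it; hence
`q^{(v|·)} - q^{(u|·)} = (q^{|v|} - q^{|u|}) 1_{B_v}`, and `q^{(1|·)} = 1_B`. So every cylinder
indicator lies in the span of the `π(γ)1_B`. The cylinders form a π-system generating the σ-algebra
of `B`, so a vector orthogonal to all of them integrates to zero over every measurable set, hence
vanishes.
-/

lemma findGreatest_congr {P Q : ℕ → Prop} [DecidablePred P] [DecidablePred Q] {n : ℕ}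
    (h : ∀ k ≤ n, (P k ↔ Q k)) : Nat.findGreatest P n = Nat.findGreatest Q n := by
  induction n with
  | zero => rfl
  | succ n ih => simp only [Nat.findGreatest_succ, h (n + 1) le_rfl, ih fun k hk => h k (by omega)]

lemma sqrt_zpow_two_mul_sub {q : ℝ} (hq : 0 < q) (k n : ℕ) :
    √(q ^ (2 * (k : ℤ) - n)) = q ^ k / √(q ^ n) := by
  have h : q ^ (2 * (k : ℤ) - n) = (q ^ k) ^ 2 / q ^ n := by
    rw [zpow_sub₀ hq.ne']
    norm_cast
    ring
  rw [h, Real.sqrt_div (by positivity), Real.sqrt_sq (by positivity)]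

section PiSystem

variable {α E : Type*} {m : MeasurableSpace α} {μ : Measure α}
  [NormedAddCommGroup E] [NormedSpace ℝ E] [CompleteSpace E]

theorem ae_eq_zero_of_forall_setIntegral_eq_zero_of_isPiSystem {s : Set (Set α)}
    (h_gen : m = MeasurableSpace.generateFrom s) (h_pi : IsPiSystem s) (h_univ : Set.univ ∈ s)
    {f : α → E} (hf : Integrable f μ) (hs : ∀ t ∈ s, ∫ x in t, f x ∂μ = 0) : f =ᵐ[μ] 0 := by
  suffices h : ∀ t, MeasurableSet t → ∫ x in t, f x ∂μ = 0 from
    hf.ae_eq_zero_of_forall_setIntegral_eq_zero fun t ht _ => h t ht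
  intro t ht
  induction t, ht using MeasurableSpace.induction_on_inter h_gen h_pi with
  | empty => simp
  | basic t ht => exact hs t ht
  | compl t ht ht_zero =>
    have h_add := integral_add_compl ht hf
    rw [ht_zero, zero_add] at h_add
    rw [h_add, ← setIntegral_univ, hs _ h_univ]
  | iUnion t hd hm ht_zero =>
    rw [integral_iUnion hm hd hf.integrableOn]
    simp [ht_zero]

end PiSystem

section AEMem

variable {α 𝕜 E : Type*} {m : MeasurableSpace α} {μ : Measure α} {p : ℝ≥0∞}
  [NormedField 𝕜] [NormedAddCommGroup E] [NormedSpace 𝕜 E]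

def AEMem (K : Submodule 𝕜 (Lp E p μ)) (φ : α → E) : Prop :=
  ∃ f ∈ K, (f : α → E) =ᵐ[μ] φ

variable {K : Submodule 𝕜 (Lp E p μ)} {φ ψ : α → E}

lemma AEMem.congr (h : AEMem K φ) (hφψ : φ =ᵐ[μ] ψ) : AEMem K ψ :=
  let ⟨f, hfK, hf⟩ := h
  ⟨f, hfK, hf.trans hφψ⟩

lemma AEMem.smul (h : AEMem K φ) (c : 𝕜) : AEMem K (c • φ) :=
  let ⟨f, hfK, hf⟩ := h
  ⟨c • f, K.smul_mem c hfK, (Lp.coeFn_smul c f).trans (hf.const_smul c)⟩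

lemma MemLp.aeMem (hφ : MemLp φ p μ) (h : hφ.toLp φ ∈ K) : AEMem K φ :=
  ⟨_, h, hφ.coeFn_toLp⟩

lemma AEMem.sub (hφ : AEMem K φ) (hψ : AEMem K ψ) : AEMem K (φ - ψ) :=
  let ⟨f, hfK, hf⟩ := hφ
  let ⟨g, hgK, hg⟩ := hψ
  ⟨f - g, K.sub_mem hfK hgK, (Lp.coeFn_sub f g).trans (hf.sub hg)⟩

end AEMem

theorem topologicalClosure_eq_top_of_aeMem_indicator {α 𝕜 : Type*} [RCLike 𝕜]
    {m : MeasurableSpace α} {μ : Measure α} [IsFiniteMeasure μ] {s : Set (Set α)}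
    (h_gen : m = MeasurableSpace.generateFrom s) (h_pi : IsPiSystem s) (h_univ : Set.univ ∈ s)
    {K : Submodule 𝕜 (Lp 𝕜 2 μ)} (hK : ∀ t ∈ s, AEMem K (t.indicator 1)) :
    K.topologicalClosure = ⊤ := by
  rw [Submodule.topologicalClosure_eq_top_iff, Submodule.eq_bot_iff]
  intro g hg
  refine Lp.eq_zero_iff_ae_eq_zero.2 <| ae_eq_zero_of_forall_setIntegral_eq_zero_of_isPiSystem
    h_gen h_pi h_univ ((Lp.memLp g).integrable one_le_two) fun t ht => ?_
  obtain ⟨f, hfK, hf⟩ := hK t ht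
  have hmt : MeasurableSet t := h_gen ▸ MeasurableSpace.measurableSet_generateFrom ht
  have hf_eq : f = indicatorConstLp 2 hmt (measure_ne_top μ t) (1 : 𝕜) :=
    Lp.ext (hf.trans indicatorConstLp_coeFn.symm)
  rw [← L2.inner_indicatorConstLp_one hmt (measure_ne_top μ t), ← hf_eq]
  exact (K.mem_orthogonal g).1 hg f hfK

section Words

variable {r : ℕ}

lemma ne_bar_iff {x y : Letter r} : y ≠ bar x ↔ (x.1 = y.1 → x.2 = y.2) := by
  obtain ⟨x₁, x₂⟩ := x
  obtain ⟨y₁, y₂⟩ := y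
  cases x₂ <;> cases y₂ <;> simp [bar, eq_comm]

def prefixWord (ξ : Boundary r) (n : ℕ) : List (Letter r) :=
  List.ofFn fun j : Fin n => ξ.1 j

lemma isReduced_prefixWord (ξ : Boundary r) (n : ℕ) : FreeGroup.IsReduced (prefixWord ξ n) :=
  List.isChain_ofFn.2 fun i _ => ne_bar_iff.1 (ξ.2 i)

lemma isPrefixSeq_prefixWord (ξ : Boundary r) (n : ℕ) : IsPrefixSeq (prefixWord ξ n) ξ.1 := by
  intro i hi
  rw [prefixWord, List.length_ofFn] at hi
  simp [prefixWord, hi]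

lemma toWord_mk_of_isReduced {l : List (Letter r)} (hl : FreeGroup.IsReduced l) :
    FreeGroup.toWord (FreeGroup.mk l) = l := by
  rw [FreeGroup.toWord_mk, hl.reduce_eq]

lemma IsPrefixSeq.of_append {l l' : List (Letter r)} {ξ : ℕ → Letter r}
    (h : IsPrefixSeq (l ++ l') ξ) : IsPrefixSeq l ξ := fun i hi => by
  simpa [List.getElem?_append_left hi] using h i (by simp; omega)

lemma measurableSet_setOf_isPrefixSeq (l : List (Letter r)) :
    MeasurableSet {ξ : Boundary r | IsPrefixSeq l ξ.1} := by
  simp only [IsPrefixSeq, Set.ofPred_forall]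
  exact .iInter fun i => .iInter fun _ =>
    (MeasurableSet.of_discrete (s := {a | l[i]? = some a})).preimage
      ((measurable_pi_apply i).comp measurable_subtype_coe)

lemma measurableSet_cylinder (u : FreeGroup (Fin r)) : MeasurableSet (cylinder u) :=
  measurableSet_setOf_isPrefixSeq _

lemma cylinder_one : cylinder (1 : FreeGroup (Fin r)) = Set.univ := by
  ext ξ
  simp [cylinder, IsPrefixSeq]

lemma cylinder_subset_of_mem {u v : FreeGroup (Fin r)} {ξ : Boundary r}
    (huv : (FreeGroup.toWord u).length ≤ (FreeGroup.toWord v).length)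
    (hu : ξ ∈ cylinder u) (hv : ξ ∈ cylinder v) : cylinder v ⊆ cylinder u := by
  intro η hη i hi
  have hvi := (hv i (by omega)).symm.trans (hη i (by omega))
  rw [hu i hi, Option.some_inj.1 hvi]

lemma isPiSystem_range_cylinder (r : ℕ) : IsPiSystem (Set.range (cylinder (r := r))) := by
  rintro _ ⟨u, rfl⟩ _ ⟨v, rfl⟩ ⟨ξ, hu, hv⟩
  rcases le_total (FreeGroup.toWord u).length (FreeGroup.toWord v).length with huv | hvu
  · rw [Set.inter_eq_right.2 (cylinder_subset_of_mem huv hu hv)]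
    exact ⟨v, rfl⟩
  · rw [Set.inter_eq_left.2 (cylinder_subset_of_mem hvu hv hu)]
    exact ⟨u, rfl⟩

lemma preimage_apply_eq_iUnion_cylinder (i : ℕ) (a : Letter r) :
    (fun ξ : Boundary r => ξ.1 i) ⁻¹' {a} =
      ⋃ (u : FreeGroup (Fin r)) (_ : (FreeGroup.toWord u)[i]? = some a), cylinder u := by
  ext ξ
  simp only [Set.mem_preimage, Set.mem_singleton_iff, Set.mem_iUnion, exists_prop]
  constructor
  · rintro rfl
    refine ⟨FreeGroup.mk (prefixWord ξ (i + 1)), ?_, ?_⟩ <;>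
      simp only [cylinder, Set.mem_ofPred_eq, toWord_mk_of_isReduced (isReduced_prefixWord ξ _)]
    · rw [prefixWord, List.getElem?_ofFn]
      simp
    · exact isPrefixSeq_prefixWord ξ _
  · rintro ⟨u, hua, hu⟩
    have hi : i < (FreeGroup.toWord u).length := by
      by_contra h
      simp [List.getElem?_eq_none (not_lt.1 h)] at hua
    exact Option.some_inj.1 ((hu i hi).symm.trans hua)

lemma measurableSpace_eq_generateFrom_cylinder (r : ℕ) :
    (inferInstance : MeasurableSpace (Boundary r)) =
      MeasurableSpace.generateFrom (Set.range cylinder) := by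
  refine le_antisymm ?_ (MeasurableSpace.generateFrom_le ?_)
  · refine Measurable.comap_le <| @measurable_pi_lambda (Boundary r) ℕ (fun _ => Letter r)
      (MeasurableSpace.generateFrom (Set.range cylinder)) _ Subtype.val fun i =>
        @measurable_to_countable' (Letter r) (Boundary r) _ _
          (MeasurableSpace.generateFrom (Set.range cylinder)) _ fun a => ?_
    rw [preimage_apply_eq_iUnion_cylinder]
    exact .iUnion fun u => .iUnion fun _ => MeasurableSpace.measurableSet_generateFrom ⟨u, rfl⟩
  · rintro _ ⟨u, rfl⟩
    exact measurableSet_cylinder u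

end Words

section Gromov

variable {r : ℕ}

lemma gromov_le_length (l : List (Letter r)) (ξ : ℕ → Letter r) : gromov l ξ ≤ l.length :=
  Nat.findGreatest_le _

lemma gromov_eq_length {l : List (Letter r)} {ξ : ℕ → Letter r} (h : IsPrefixSeq l ξ) :
    gromov l ξ = l.length :=
  Nat.findGreatest_eq h

open Classical in
lemma gromov_append_singleton (l : List (Letter r)) (a : Letter r) (ξ : ℕ → Letter r) :
    gromov (l ++ [a]) ξ = if IsPrefixSeq (l ++ [a]) ξ then l.length + 1 else gromov l ξ := by
  unfold gromov
  rw [List.length_append, List.length_singleton, Nat.findGreatest_succ]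
  congr 1
  · simp only [IsPrefixSeq, List.length_append, List.length_singleton, Nat.lt_succ_iff]
  · refine findGreatest_congr fun k hk => forall_congr' fun i => imp_congr_right fun hi => ?_
    rw [List.getElem?_append_left (by omega)]

open Classical in
lemma pow_gromov_append_singleton {R : Type*} [Ring R] (x : R) (l : List (Letter r))
    (a : Letter r) (ξ : ℕ → Letter r) :
    x ^ gromov (l ++ [a]) ξ = x ^ gromov l ξ +
      if IsPrefixSeq (l ++ [a]) ξ then x ^ (l.length + 1) - x ^ l.length else 0 := by
  rw [gromov_append_singleton]
  split_ifs with h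
  · rw [gromov_eq_length h.of_append]
    abel
  · rw [add_zero]

lemma measurable_gromov (l : List (Letter r)) : Measurable fun ξ : Boundary r => gromov l ξ.1 := by
  induction l using List.reverseRecOn with
  | nil => exact measurable_const
  | append_singleton l a ih =>
    simp_rw [gromov_append_singleton]
    exact Measurable.ite (measurableSet_setOf_isPrefixSeq _) measurable_const ih

lemma memLp_comp_gromov {E : Type*} [NormedAddCommGroup E] {μ : Measure (Boundary r)}
    [IsFiniteMeasure μ] {p : ℝ≥0∞} (φ : ℕ → E) (l : List (Letter r)) :
    MemLp (fun ξ : Boundary r => φ (gromov l ξ.1)) p μ :=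
  .of_bound
    (StronglyMeasurable.of_discrete.comp_measurable (measurable_gromov l)).aestronglyMeasurable
    (∑ k ∈ Finset.range (l.length + 1), ‖φ k‖) <| .of_forall fun ξ =>
      Finset.single_le_sum (f := fun k => ‖φ k‖) (fun _ _ => norm_nonneg _)
        (Finset.mem_range.2 (Nat.lt_succ_of_le (gromov_le_length l ξ.1)))

end Gromov

theorem aeMem_indicator_cylinder {r : ℕ} {𝕜 : Type*} [NormedField 𝕜] {μ : Measure (Boundary r)}
    {p : ℝ≥0∞} {K : Submodule 𝕜 (Lp 𝕜 p μ)} {x : 𝕜} (hx0 : x ≠ 0) (hx1 : x ≠ 1)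
    (hK : ∀ u : FreeGroup (Fin r), AEMem K fun ξ => x ^ gromov (FreeGroup.toWord u) ξ.1)
    (v : FreeGroup (Fin r)) : AEMem K ((cylinder v).indicator 1) := by
  rcases (FreeGroup.toWord v).eq_nil_or_concat with hv | ⟨l, a, hv⟩
  · refine (hK v).congr (.of_forall fun ξ => ?_)
    rw [hv, FreeGroup.toWord_eq_nil_iff.1 hv, cylinder_one]
    simp [gromov]
  · rw [List.concat_eq_append] at hv
    have hl : FreeGroup.toWord (FreeGroup.mk l) = l :=
      toWord_mk_of_isReduced ((FreeGroup.isReduced_toWord (x := v)).infix ⟨[], [a], by simp [hv]⟩)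
    have hc : x ^ (l.length + 1) - x ^ l.length ≠ 0 := by
      rw [pow_succ, ← mul_sub_one]
      exact mul_ne_zero (pow_ne_zero _ hx0) (sub_ne_zero.2 hx1)
    refine (((hK v).sub (hK (FreeGroup.mk l))).smul (x ^ (l.length + 1) - x ^ l.length)⁻¹).congr
      (.of_forall fun ξ => ?_)
    classical
    simp only [Pi.smul_apply, Pi.sub_apply, smul_eq_mul, hv, hl, pow_gromov_append_singleton,
      add_sub_cancel_left, Set.indicator_apply, cylinder, Set.mem_ofPred_eq, Pi.one_apply]
    split_ifs
    · exact inv_mul_cancel₀ hc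
    · exact mul_zero _

lemma aeMem_pow_gromov {r : ℕ} (hr : 1 ≤ r) {μ : Measure (Boundary r)} [IsFiniteMeasure μ]
    {K : Submodule ℂ (Lp ℂ 2 μ)}
    (hK : ∀ γ (g : Lp ℂ 2 μ), (g : Boundary r → ℂ) =ᵐ[μ] (fun ξ => (√(PK γ ξ) : ℂ)) → g ∈ K)
    (γ : FreeGroup (Fin r)) :
    AEMem K fun ξ => ((2 * r - 1 : ℝ) : ℂ) ^ gromov (FreeGroup.toWord γ) ξ.1 := by
  have hq : (0 : ℝ) < 2 * r - 1 := by
    have : (1 : ℝ) ≤ r := by exact_mod_cast hr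
    linarith
  have hmem : MemLp (fun ξ => (√(PK γ ξ) : ℂ)) 2 μ :=
    memLp_comp_gromov (fun k => ((√((2 * r - 1 : ℝ) ^
      (2 * (k : ℤ) - (FreeGroup.toWord γ).length)) : ℝ) : ℂ)) _
  refine ((MemLp.aeMem hmem (hK γ _ hmem.coeFn_toLp)).smul
    ((√((2 * r - 1 : ℝ) ^ (FreeGroup.toWord γ).length) : ℝ) : ℂ)).congr (.of_forall fun ξ => ?_)
  have hs : √((2 * r - 1 : ℝ) ^ (FreeGroup.toWord γ).length) ≠ 0 := by positivity
  simp only [Pi.smul_apply, smul_eq_mul, PK, sqrt_zpow_two_mul_sub hq]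
  push_cast
  field_simp

theorem constant_function_cyclic_general {r : ℕ} (hr : 2 ≤ r)
    (μ : Measure (Boundary r)) [IsProbabilityMeasure μ] :
    (Submodule.span ℂ {g : Lp ℂ 2 μ | ∃ γ : FreeGroup (Fin r),
        (g : Boundary r → ℂ) =ᵐ[μ]
          fun ξ => (Real.sqrt (PK γ ξ) : ℂ)}).topologicalClosure = ⊤ := by
  have hq : (1 : ℝ) < 2 * r - 1 := by
    have : (2 : ℝ) ≤ r := by exact_mod_cast hr
    linarith
  refine topologicalClosure_eq_top_of_aeMem_indicator (measurableSpace_eq_generateFrom_cylinder r)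
    (isPiSystem_range_cylinder r) ⟨1, cylinder_one⟩ ?_
  rintro _ ⟨v, rfl⟩
  refine aeMem_indicator_cylinder (by exact_mod_cast (zero_lt_one.trans hq).ne')
    (by exact_mod_cast hq.ne') (aeMem_pow_gromov (by omega) fun γ _ hg => ?_) v
  exact Submodule.subset_span ⟨γ, hg⟩

/-- the constant function $1_B$ is a cyclic vector for $π$.
The closed linear span in $L²(B,μ)$ of the functions
$π(γ)1_B = P(γ,·)^{1/2}$, $γ ∈ F_r$, is all of $L²(B,μ)$. -/
theorem constant_function_cyclic {r : ℕ} (hr : 2 ≤ r)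
    [BorelSpace (Boundary r)]
    (μ : Measure (Boundary r)) [IsProbabilityMeasure μ]
    (hμ : ∀ u : FreeGroup (Fin r), u ≠ 1 →
      μ (cylinder u) =
        1 / (2 * (r : ℝ≥0∞) * (2 * (r : ℝ≥0∞) - 1) ^ ((FreeGroup.toWord u).length - 1))) :
    (Submodule.span ℂ {g : Lp ℂ 2 μ | ∃ γ : FreeGroup (Fin r),
        (g : Boundary r → ℂ) =ᵐ[μ]
          fun ξ => (Real.sqrt (PK γ ξ) : ℂ)}).topologicalClosure = ⊤ :=
  constant_function_cyclic_general hr μ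

end ArxivFree
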